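/- arXiv:2208.09544 — 2 statements merged into one kernel-verified Lean document; each statement's English description precedes it below -/
import Mathlib

section
/- Let (y_n) be a nondecreasing sequence of positive integers and A(n,k) its output array. For all n ≥ 2 and all k with k ≤ y_n, A(n,k) ≥ min(y_{n-1}+1, k+1). -/
/-- `x : Fin n → ℕ` (0-indexed version of `(x_1,…,x_n)`) is a valid n-tuple for the
input sequence `y`: `x_1 ≤ y n` and `x_{j+1} ≤ min (x_j) (y (n - j))` for `1 ≤ j ≤ n-1`. -/
def IsValid (y : ℕ → ℕ) (n : ℕ) (x : Fin n → ℕ) : Prop :=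
  (∀ h : 0 < n, x ⟨0, h⟩ ≤ y n) ∧
  ∀ i : ℕ, ∀ h : i + 1 < n,
    x ⟨i + 1, h⟩ ≤ min (x ⟨i, Nat.lt_of_succ_lt h⟩) (y (n - (i + 1)))

/-- `A y n k` : number of valid n-tuples whose first entry equals `k`. -/
noncomputable def A (y : ℕ → ℕ) (n k : ℕ) : ℕ :=
  Nat.card {x : Fin n → ℕ // IsValid y n x ∧ ∀ h : 0 < n, x ⟨0, h⟩ = k}

/-- `W y n` : total number of valid n-tuples. -/
noncomputable def W (y : ℕ → ℕ) (n : ℕ) : ℕ :=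
  Nat.card {x : Fin n → ℕ // IsValid y n x}

lemma valid_bound (y : ℕ → ℕ) (n : ℕ) (x : Fin n → ℕ) (hx : IsValid y n x) :
    ∀ i : Fin n, x i ≤ y n := by
  rintro ⟨i, hi⟩
  induction i with
  | zero => exact hx.1 hi
  | succ j ih =>
    exact le_trans (le_trans (hx.2 j hi) (min_le_left _ _)) (ih (Nat.lt_of_succ_lt hi))

instance validFinite (y : ℕ → ℕ) (n k : ℕ) :
    Finite {x : Fin n → ℕ // IsValid y n x ∧ ∀ h : 0 < n, x ⟨0, h⟩ = k} := by
  apply Finite.of_injective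
    (fun p (i : Fin n) => (⟨p.1 i, Nat.lt_succ_of_le (valid_bound y n p.1 p.2.1 i)⟩ :
      Fin (y n + 1)))
  intro a b h
  ext i
  exact congrArg Fin.val (congrFun h i)

theorem stmt6 (y : ℕ → ℕ) (hmono : ∀ m, 1 ≤ m → y m ≤ y (m + 1))
    (hpos : ∀ m, 1 ≤ m → 1 ≤ y m) (n k : ℕ) (hn : 2 ≤ n) (hk : k ≤ y n) :
    min (y (n - 1) + 1) (k + 1) ≤ A y n k := by
  have h1n : 1 < n := by omega
  set M := min (y (n - 1)) k with hM
  have key : M + 1 ≤ A y n k := by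
    have := Nat.card_le_card_of_injective
      (α := Fin (M + 1))
      (β := {x : Fin n → ℕ // IsValid y n x ∧ ∀ h : 0 < n, x ⟨0, h⟩ = k})
      (fun m => ⟨fun i => if i.val = 0 then k else min m.val (y (n - i.val)), by
        have hm : m.val ≤ M := Nat.lt_succ_iff.mp m.2
        refine ⟨⟨fun h => by simp [hk], fun i h => ?_⟩, fun h => by simp⟩
        simp only [Nat.succ_ne_zero, if_neg, le_min_iff]
        refine ⟨?_, min_le_right _ _⟩
        rcases Nat.eq_zero_or_pos i with hi | hi
        · subst hi
          simp only [if_pos rfl]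
          exact le_trans (min_le_left _ _) (le_trans hm (min_le_right _ _))
        · rw [if_neg hi.ne']
          refine min_le_min le_rfl ?_
          have h2 : (1:ℕ) ≤ n - (i + 1) := by omega
          have := hmono (n - (i + 1)) h2
          have heq : n - (i + 1) + 1 = n - i := by omega
          rwa [heq] at this⟩)
      (by
        intro a b hab
        have hab1 := congrArg (fun p => p.1 ⟨1, h1n⟩) hab
        simp only at hab1
        have ha : a.val ≤ y (n - 1) := le_trans (Nat.lt_succ_iff.mp a.2) (min_le_left _ _)
        have hb : b.val ≤ y (n - 1) := le_trans (Nat.lt_succ_iff.mp b.2) (min_le_left _ _)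
        ext
        simpa [min_eq_left ha, min_eq_left hb] using hab1)
    simpa [A, Nat.card_eq_fintype_card] using this
  have : min (y (n - 1) + 1) (k + 1) = M + 1 := by
    rw [hM]; omega
  omega
end

section
/- Let (y_n) be a nondecreasing sequence of positive integers and W(n) the number of valid n-tuples. Then for all n ≥ 2, W(n) ≥ (1 + y_n - y_{n-1}) · W(n-1). -/
theorem IsValid.le_bound {y : ℕ → ℕ} {n : ℕ} {x : Fin n → ℕ} (hx : IsValid y n x) (i : Fin n) :
    x i ≤ y n := by
  obtain ⟨i, hi⟩ := i
  induction i with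
  | zero => exact hx.1 hi
  | succ j ih => exact (hx.2 j hi).trans (min_le_left _ _) |>.trans (ih (Nat.lt_of_succ_lt hi))

instance (y : ℕ → ℕ) (n : ℕ) : Finite {x : Fin n → ℕ // IsValid y n x} :=
  Finite.of_injective (fun x i => (⟨x.1 i, Nat.lt_succ_of_le (x.2.le_bound i)⟩ : Fin (y n + 1)))
    fun _ _ h => Subtype.ext <| funext fun i => congrArg Fin.val (congrFun h i)

theorem isValid_cons_iff {y : ℕ → ℕ} {m a : ℕ} {x : Fin m → ℕ} :
    IsValid y (m + 1) (Fin.cons a x : Fin (m + 1) → ℕ) ↔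
      a ≤ y (m + 1) ∧ (∀ h : 0 < m, x ⟨0, h⟩ ≤ a) ∧ IsValid y m x := by
  constructor
  · rintro ⟨hhead, htail⟩
    refine ⟨hhead m.succ_pos, fun h => (htail 0 (by omega)).trans (min_le_left _ _),
      fun h => (htail 0 (by omega)).trans (min_le_right _ _), fun i h => ?_⟩
    have := htail (i + 1) (by omega)
    rwa [show m + 1 - (i + 1 + 1) = m - (i + 1) by omega] at this
  · rintro ⟨ha, hx0, hhead, htail⟩
    refine ⟨fun _ => ha, fun i h => ?_⟩
    rcases i with _ | i
    · exact le_min (hx0 (by omega)) (hhead (by omega))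
    · rw [show m + 1 - (i + 1 + 1) = m - (i + 1) by omega]
      exact htail i (by omega)

/-- A first entry `a ≥ y m` dominates every entry of a valid `m`-tuple, so each
`a ∈ [y m, y (m + 1)]` can be prepended to it. -/
theorem card_Icc_mul_W_le_W_succ (y : ℕ → ℕ) (m : ℕ) :
    (y (m + 1) + 1 - y m) * W y m ≤ W y (m + 1) := by
  let prepend : Finset.Icc (y m) (y (m + 1)) × {x : Fin m → ℕ // IsValid y m x} →
      {x : Fin (m + 1) → ℕ // IsValid y (m + 1) x} := fun p =>
    ⟨Fin.cons p.1.1 p.2.1, isValid_cons_iff.2 ⟨(Finset.mem_Icc.1 p.1.2).2,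
      fun h => (p.2.2.le_bound _).trans (Finset.mem_Icc.1 p.1.2).1, p.2.2⟩⟩
  have hinj : Function.Injective prepend := fun p q h => by
    have h' : (Fin.cons p.1.1 p.2.1 : Fin (m + 1) → ℕ) = Fin.cons q.1.1 q.2.1 :=
      congrArg Subtype.val h
    obtain ⟨ha, hx⟩ := Fin.cons_injective2 h'
    exact Prod.ext (Subtype.ext ha) (Subtype.ext hx)
  have hcard : Nat.card (Finset.Icc (y m) (y (m + 1))) = y (m + 1) + 1 - y m := by
    rw [Nat.card_eq_fintype_card, Fintype.card_coe, Nat.card_Icc]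
  simpa only [W, Nat.card_prod, hcard] using Nat.card_le_card_of_injective prepend hinj

theorem stmt11_general (y : ℕ → ℕ) (n : ℕ) :
    (1 + y n - y (n - 1)) * W y (n - 1) ≤ W y n := by
  cases n with
  | zero => simp
  | succ m => simpa [add_comm 1] using card_Icc_mul_W_le_W_succ y m

theorem stmt11 (y : ℕ → ℕ) (hmono : ∀ m, 1 ≤ m → y m ≤ y (m + 1))
    (hpos : ∀ m, 1 ≤ m → 1 ≤ y m) (n : ℕ) (hn : 2 ≤ n) :
    (1 + y n - y (n - 1)) * W y (n - 1) ≤ W y n :=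
  stmt11_general y n
end
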